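/- arXiv:2210.07653 — 6 statements merged into one kernel-verified Lean document; each statement's English description precedes it below -/
import Mathlib

section
/- Let E be a real normed vector space and let A, B, C, D, p ∈ E. If p lies on the segment from A to B and also on the segment from C to D, then dist(A, D) + dist(C, B) ≤ dist(A, B) + dist(C, D). -/
/-- Exchange (uncrossing) inequality: if `p` lies on the segment from `A` to `B`
and on the segment from `C` to `D`, then swapping destinations does not increase
the total distance. -/
theorem exchange_inequality
    {E : Type*} [NormedAddCommGroup E] [NormedSpace ℝ E]
    (A B C D p : E)
    (hp₁ : p ∈ segment ℝ A B) (hp₂ : p ∈ segment ℝ C D) :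
    dist A D + dist C B ≤ dist A B + dist C D := by
  have h1 := dist_add_dist_of_mem_segment hp₁
  have h2 := dist_add_dist_of_mem_segment hp₂
  calc dist A D + dist C B ≤ (dist A p + dist p D) + (dist C p + dist p B) := by
        gcongr <;> exact dist_triangle _ _ _
    _ = (dist A p + dist p B) + (dist C p + dist p D) := by ring
    _ = dist A B + dist C D := by rw [h1, h2]
end

section
/- Let A, B, C, D, p be points of the Euclidean plane (EuclideanSpace ℝ (Fin 2)). If p lies on the segment from A to B and on the segment from C to D, but p does not lie on the segment from A to D, then dist(A, D) + dist(C, B) < dist(A, B) + dist(C, D). -/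
set_option maxHeartbeats 1000000

/-- Strict exchange (uncrossing) inequality in the Euclidean plane: if the common
point `p` of the two crossing segments does not lie on the segment from `A` to `D`,
the swapped assignment is strictly shorter. -/
theorem exchange_inequality_strict
    (A B C D p : EuclideanSpace ℝ (Fin 2))
    (hp₁ : p ∈ segment ℝ A B) (hp₂ : p ∈ segment ℝ C D)
    (hp₃ : p ∉ segment ℝ A D) :
    dist A D + dist C B < dist A B + dist C D := by
  have hAB : dist A p + dist p B = dist A B := dist_add_dist_of_mem_segment hp₁
  have hCD : dist C p + dist p D = dist C D := dist_add_dist_of_mem_segment hp₂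
  have h2 : dist C B ≤ dist C p + dist p B := dist_triangle C p B
  have h1 : dist A D < dist A p + dist p D := by
    rcases lt_or_eq_of_le (dist_triangle A p D) with h | h
    · exact h
    · exact absurd ((mem_segment_iff_wbtw).2 (dist_add_dist_eq_iff.1 h.symm)) hp₃
  linarith
end

section
/- Let A, B, C, D, p be points of the Euclidean plane (EuclideanSpace ℝ (Fin 2)). If p lies on the segment from A to B and on the segment from C to D, and dist(A, D) + dist(C, B) = dist(A, B) + dist(C, D), then p lies on the segment from A to D and p lies on the segment from C to B. -/
/-- Equality case of the exchange (uncrossing) inequality in the Euclidean plane: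
equality forces the collision point to lie on both swapped segments. -/
theorem exchange_inequality_eq_case
    (A B C D p : EuclideanSpace ℝ (Fin 2))
    (hp₁ : p ∈ segment ℝ A B) (hp₂ : p ∈ segment ℝ C D)
    (heq : dist A D + dist C B = dist A B + dist C D) :
    p ∈ segment ℝ A D ∧ p ∈ segment ℝ C B := by
  have h1 := dist_add_dist_of_mem_segment hp₁
  have h2 := dist_add_dist_of_mem_segment hp₂
  have t1 : dist A D ≤ dist A p + dist p D := dist_triangle _ _ _
  have t2 : dist C B ≤ dist C p + dist p B := dist_triangle _ _ _
  have e1 : dist A p + dist p D = dist A D := by linarith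
  have e2 : dist C p + dist p B = dist C B := by linarith
  exact ⟨(dist_add_dist_eq_iff.mp e1).mem_segment, (dist_add_dist_eq_iff.mp e2).mem_segment⟩
end

section
/- Let E be a real normed vector space, let v_max > 0, and let A, B, C, D ∈ E. Let t_A < t_B and t_C < t_D be real times, and suppose dist(A,B)/(t_B − t_A) ≤ v_max and dist(C,D)/(t_D − t_C) ≤ v_max. Define the constant-speed straight-line trajectories γ₁(t) = A + ((t − t_A)/(t_B − t_A)) • (B − A) and γ₂(t) = C + ((t − t_C)/(t_D − t_C)) • (D − C). If there exists a time t* with t_A ≤ t* ≤ t_B, t_C ≤ t* ≤ t_D and γ₁(t*) = γ₂(t*), then dist(A, D) ≤ v_max · (t_D − t_A) and dist(C, B) ≤ v_max · (t_B − t_C). -/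
/-!
At the collision time `t` both robots are at the same point `X`. Robot 1 needs time `t - tA` to
reach `X` from `A`, and robot 2 needs `tD - t` to go on from `X` to `D`, both at speed at most
`vmax`; so the broken path `A → X → D` has length at most `vmax * (tD - tA)`, and by the triangle
inequality so does the straight segment `A → D`. The same argument applies to `C → X → B`.
-/

open AffineMap

theorem div_mul_le_mul_of_le_mul {a T d v : ℝ} (ha : 0 ≤ a) (hT : 0 < T) (h : d ≤ v * T) :
    a / T * d ≤ v * a :=
  calc a / T * d ≤ a / T * (v * T) := mul_le_mul_of_nonneg_left h (div_nonneg ha hT.le)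
    _ = v * a := by field_simp

section LinearTrajectory

variable {V P : Type*} [SeminormedAddCommGroup V] [NormedSpace ℝ V] [PseudoMetricSpace P]
  [NormedAddTorsor V P] {p q : P} {v t₀ t₁ t : ℝ}

theorem dist_left_lineMap_le_of_speed (h₀₁ : t₀ < t₁) (ht₀ : t₀ ≤ t)
    (hspeed : dist p q ≤ v * (t₁ - t₀)) :
    dist p (lineMap p q ((t - t₀) / (t₁ - t₀))) ≤ v * (t - t₀) := by
  have hT : 0 < t₁ - t₀ := sub_pos.2 h₀₁
  rw [dist_left_lineMap, Real.norm_of_nonneg (div_nonneg (sub_nonneg.2 ht₀) hT.le)]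
  exact div_mul_le_mul_of_le_mul (sub_nonneg.2 ht₀) hT hspeed

theorem dist_lineMap_right_le_of_speed (h₀₁ : t₀ < t₁) (ht₁ : t ≤ t₁)
    (hspeed : dist p q ≤ v * (t₁ - t₀)) :
    dist (lineMap p q ((t - t₀) / (t₁ - t₀))) q ≤ v * (t₁ - t) := by
  have hT : 0 < t₁ - t₀ := sub_pos.2 h₀₁
  have hremaining : 1 - (t - t₀) / (t₁ - t₀) = (t₁ - t) / (t₁ - t₀) := by
    field_simp
    ring
  rw [dist_lineMap_right, hremaining, Real.norm_of_nonneg (div_nonneg (sub_nonneg.2 ht₁) hT.le)]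
  exact div_mul_le_mul_of_le_mul (sub_nonneg.2 ht₁) hT hspeed

end LinearTrajectory

theorem swapped_assignment_feasible_general
    {E : Type*} [NormedAddCommGroup E] [NormedSpace ℝ E]
    (vmax : ℝ)
    (A B C D : E) (tA tB tC tD : ℝ)
    (hAB : tA < tB) (hCD : tC < tD)
    (hv₁ : dist A B / (tB - tA) ≤ vmax)
    (hv₂ : dist C D / (tD - tC) ≤ vmax)
    (γ₁ γ₂ : ℝ → E)
    (hγ₁ : ∀ t, γ₁ t = A + ((t - tA) / (tB - tA)) • (B - A))
    (hγ₂ : ∀ t, γ₂ t = C + ((t - tC) / (tD - tC)) • (D - C))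
    (hcol : ∃ t, tA ≤ t ∧ t ≤ tB ∧ tC ≤ t ∧ t ≤ tD ∧ γ₁ t = γ₂ t) :
    dist A D ≤ vmax * (tD - tA) ∧ dist C B ≤ vmax * (tB - tC) := by
  obtain ⟨t, htA, htB, htC, htD, hmeet⟩ := hcol
  have hspeed₁ : dist A B ≤ vmax * (tB - tA) := (div_le_iff₀ (sub_pos.2 hAB)).1 hv₁
  have hspeed₂ : dist C D ≤ vmax * (tD - tC) := (div_le_iff₀ (sub_pos.2 hCD)).1 hv₂
  have hX₁ : γ₁ t = lineMap A B ((t - tA) / (tB - tA)) := by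
    rw [hγ₁, lineMap_apply_module', add_comm]
  have hX₂ : γ₁ t = lineMap C D ((t - tC) / (tD - tC)) := by
    rw [hmeet, hγ₂, lineMap_apply_module', add_comm]
  have hAX : dist A (γ₁ t) ≤ vmax * (t - tA) := hX₁ ▸ dist_left_lineMap_le_of_speed hAB htA hspeed₁
  have hXB : dist (γ₁ t) B ≤ vmax * (tB - t) := hX₁ ▸ dist_lineMap_right_le_of_speed hAB htB hspeed₁
  have hCX : dist C (γ₁ t) ≤ vmax * (t - tC) := hX₂ ▸ dist_left_lineMap_le_of_speed hCD htC hspeed₂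
  have hXD : dist (γ₁ t) D ≤ vmax * (tD - t) := hX₂ ▸ dist_lineMap_right_le_of_speed hCD htD hspeed₂
  constructor
  · calc dist A D ≤ dist A (γ₁ t) + dist (γ₁ t) D := dist_triangle _ _ _
      _ ≤ vmax * (tD - tA) := by linarith
  · calc dist C B ≤ dist C (γ₁ t) + dist (γ₁ t) B := dist_triangle _ _ _
      _ ≤ vmax * (tB - tC) := by linarith

/-- Temporal-feasibility step: a collision of the two constant-speed straight-line
trajectories implies the swapped direct assignments are traversable at speed at
most `vmax`. -/
theorem swapped_assignment_feasible
    {E : Type*} [NormedAddCommGroup E] [NormedSpace ℝ E]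
    (vmax : ℝ) (hv : 0 < vmax)
    (A B C D : E) (tA tB tC tD : ℝ)
    (hAB : tA < tB) (hCD : tC < tD)
    (hv₁ : dist A B / (tB - tA) ≤ vmax)
    (hv₂ : dist C D / (tD - tC) ≤ vmax)
    (γ₁ γ₂ : ℝ → E)
    (hγ₁ : ∀ t, γ₁ t = A + ((t - tA) / (tB - tA)) • (B - A))
    (hγ₂ : ∀ t, γ₂ t = C + ((t - tC) / (tD - tC)) • (D - C))
    (hcol : ∃ t, tA ≤ t ∧ t ≤ tB ∧ tC ≤ t ∧ t ≤ tD ∧ γ₁ t = γ₂ t) :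
    dist A D ≤ vmax * (tD - tA) ∧ dist C B ≤ vmax * (tB - tC) :=
  swapped_assignment_feasible_general vmax A B C D tA tB tC tD hAB hCD hv₁ hv₂ γ₁ γ₂ hγ₁ hγ₂ hcol
end

section
/- Let E be a real normed vector space, let v_max > 0, and let A, B, C, D ∈ E. Let t_A < t_B and t_C < t_D be real times with dist(A,B)/(t_B − t_A) ≤ v_max and dist(C,D)/(t_D − t_C) ≤ v_max. Define γ₁(t) = A + ((t − t_A)/(t_B − t_A)) • (B − A) and γ₂(t) = C + ((t − t_C)/(t_D − t_C)) • (D − C). If dist(A, B) + dist(C, D) < dist(A, D) + dist(C, B), then for every time t with t_A ≤ t ≤ t_B and t_C ≤ t ≤ t_D, one has γ₁(t) ≠ γ₂(t). -/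
lemma seg_dist {E : Type*} [NormedAddCommGroup E] [NormedSpace ℝ E]
    (A B : E) (s : ℝ) (h0 : 0 ≤ s) (h1 : s ≤ 1) :
    dist A (A + s • (B - A)) + dist (A + s • (B - A)) B = dist A B := by
  have h1' : 0 ≤ 1 - s := by linarith
  have e1 : dist A (A + s • (B - A)) = s * ‖B - A‖ := by
    rw [dist_eq_norm]
    have : A - (A + s • (B - A)) = (-s) • (B - A) := by module
    rw [this, norm_smul, norm_neg, Real.norm_of_nonneg h0]
  have e2 : dist (A + s • (B - A)) B = (1 - s) * ‖B - A‖ := by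
    rw [dist_eq_norm]
    have : A + s • (B - A) - B = (-(1 - s)) • (B - A) := by module
    rw [this, norm_smul, norm_neg, Real.norm_of_nonneg h1']
  rw [e1, e2, dist_eq_norm, ← norm_neg (A - B)]
  have : -(A - B) = B - A := by abel
  rw [this]; ring

/-- Two-robot form of Theorem 1: if the current assignment is strictly shorter than
the swapped one, the two constant-speed straight-line trajectories never collide. -/
theorem optimal_assignment_collision_free
    {E : Type*} [NormedAddCommGroup E] [NormedSpace ℝ E]
    (vmax : ℝ) (hv : 0 < vmax)
    (A B C D : E) (tA tB tC tD : ℝ)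
    (hAB : tA < tB) (hCD : tC < tD)
    (hv₁ : dist A B / (tB - tA) ≤ vmax)
    (hv₂ : dist C D / (tD - tC) ≤ vmax)
    (γ₁ γ₂ : ℝ → E)
    (hγ₁ : ∀ t, γ₁ t = A + ((t - tA) / (tB - tA)) • (B - A))
    (hγ₂ : ∀ t, γ₂ t = C + ((t - tC) / (tD - tC)) • (D - C))
    (hopt : dist A B + dist C D < dist A D + dist C B) :
    ∀ t, tA ≤ t → t ≤ tB → tC ≤ t → t ≤ tD → γ₁ t ≠ γ₂ t := by
  intro t h1 h2 h3 h4 heq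
  set s₁ : ℝ := (t - tA) / (tB - tA) with hs₁
  set s₂ : ℝ := (t - tC) / (tD - tC) with hs₂
  have hs₁0 : 0 ≤ s₁ := div_nonneg (by linarith) (by linarith)
  have hs₁1 : s₁ ≤ 1 := by
    rw [hs₁, div_le_one (by linarith)]; linarith
  have hs₂0 : 0 ≤ s₂ := div_nonneg (by linarith) (by linarith)
  have hs₂1 : s₂ ≤ 1 := by
    rw [hs₂, div_le_one (by linarith)]; linarith
  set P : E := A + s₁ • (B - A) with hP
  have hPC : P = C + s₂ • (D - C) := by
    rw [hP, ← hγ₁ t, heq, hγ₂ t]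
  have d1 := seg_dist A B s₁ hs₁0 hs₁1
  have d2 := seg_dist C D s₂ hs₂0 hs₂1
  have tAD : dist A D ≤ dist A P + dist P D := dist_triangle A P D
  have tCB : dist C B ≤ dist C P + dist P B := dist_triangle C P B
  rw [← hP] at d1
  rw [← hPC] at d2
  have hPD : dist P D = dist D P := dist_comm P D
  have hCP : dist C P = dist C P := rfl
  have : dist A D + dist C B ≤ dist A B + dist C D := by
    calc dist A D + dist C B ≤ (dist A P + dist P D) + (dist C P + dist P B) := by linarith
    _ = (dist A P + dist P B) + (dist C P + dist P D) := by ring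
    _ = dist A B + dist C D := by rw [d1, d2]
  linarith
end

section
/- Let n be a natural number, let p, q : Fin n → EuclideanSpace ℝ (Fin 2) be starting positions and goal positions with p pairwise injective and q pairwise injective (p i ≠ p j and q i ≠ q j for i ≠ j). Let σ be a permutation of Fin n such that for every permutation π ≠ σ, ∑_{i} dist(p i, q (σ i)) < ∑_{i} dist(p i, q (π i)). Define the synchronized straight-line trajectories x_i(t) = (1 − t) • p i + t • q (σ i) for t ∈ [0, 1]. Then for all i ≠ j and all t ∈ [0, 1], x_i(t) ≠ x_j(t). -/
open Finset in
/-- Synchronized multi-robot version of Theorem 1: if the assignment permutation `σ`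
is the unique minimizer of the total distance, the synchronized straight-line
trajectories are collision-free. -/
theorem optimal_unique_assignment_collision_free
    (n : ℕ) (p q : Fin n → EuclideanSpace ℝ (Fin 2))
    (hp : ∀ i j : Fin n, i ≠ j → p i ≠ p j)
    (hq : ∀ i j : Fin n, i ≠ j → q i ≠ q j)
    (σ : Equiv.Perm (Fin n))
    (hmin : ∀ π : Equiv.Perm (Fin n), π ≠ σ →
      ∑ i, dist (p i) (q (σ i)) < ∑ i, dist (p i) (q (π i)))
    (x : Fin n → ℝ → EuclideanSpace ℝ (Fin 2))
    (hx : ∀ i t, x i t = (1 - t) • p i + t • q (σ i)) :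
    ∀ i j : Fin n, i ≠ j → ∀ t ∈ Set.Icc (0 : ℝ) 1, x i t ≠ x j t := by
  intro i j hij t ht hcol
  obtain ⟨ht0, ht1⟩ := ht
  set π : Equiv.Perm (Fin n) := σ * Equiv.swap i j with hπ
  have hπi : π i = σ j := by simp [hπ]
  have hπj : π j = σ i := by simp [hπ]
  have hπne : π ≠ σ := by
    intro h
    have : σ j = σ i := by rw [← hπi, h]
    exact hij (σ.injective this).symm
  -- distance along the segments
  have dstart : ∀ k, dist (p k) (x k t) = t * dist (p k) (q (σ k)) := by
    intro k
    rw [hx, dist_eq_norm, dist_eq_norm]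
    have : p k - ((1 - t) • p k + t • q (σ k)) = t • (p k - q (σ k)) := by
      module
    rw [this, norm_smul, Real.norm_eq_abs, abs_of_nonneg ht0]
  have dend : ∀ k, dist (x k t) (q (σ k)) = (1 - t) * dist (p k) (q (σ k)) := by
    intro k
    rw [hx, dist_eq_norm, dist_eq_norm]
    have : (1 - t) • p k + t • q (σ k) - q (σ k) = (1 - t) • (p k - q (σ k)) := by
      module
    rw [this, norm_smul, Real.norm_eq_abs, abs_of_nonneg (by linarith)]
  -- exchange inequalities via the collision point
  have hi : dist (p i) (q (σ j)) ≤
      t * dist (p i) (q (σ i)) + (1 - t) * dist (p j) (q (σ j)) := by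
    calc dist (p i) (q (σ j)) ≤ dist (p i) (x i t) + dist (x i t) (q (σ j)) :=
          dist_triangle _ _ _
      _ = t * dist (p i) (q (σ i)) + (1 - t) * dist (p j) (q (σ j)) := by
          rw [dstart i, hcol, dend j]
  have hj : dist (p j) (q (σ i)) ≤
      t * dist (p j) (q (σ j)) + (1 - t) * dist (p i) (q (σ i)) := by
    calc dist (p j) (q (σ i)) ≤ dist (p j) (x j t) + dist (x j t) (q (σ i)) :=
          dist_triangle _ _ _
      _ = t * dist (p j) (q (σ j)) + (1 - t) * dist (p i) (q (σ i)) := by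
          rw [dstart j, ← hcol, dend i]
  have hmemj : j ∈ univ.erase i := mem_erase.mpr ⟨hij.symm, mem_univ j⟩
  have hsum : ∑ k, dist (p k) (q (π k)) ≤ ∑ k, dist (p k) (q (σ k)) := by
    rw [← Finset.sum_erase_add univ (fun k => dist (p k) (q (π k))) (mem_univ i),
        ← Finset.sum_erase_add _ (fun k => dist (p k) (q (π k))) hmemj,
        ← Finset.sum_erase_add univ (fun k => dist (p k) (q (σ k))) (mem_univ i),
        ← Finset.sum_erase_add _ (fun k => dist (p k) (q (σ k))) hmemj]
    have hrest : ∑ k ∈ (univ.erase i).erase j, dist (p k) (q (π k)) =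
        ∑ k ∈ (univ.erase i).erase j, dist (p k) (q (σ k)) := by
      refine Finset.sum_congr rfl fun k hk => ?_
      rw [mem_erase] at hk
      have hk2 := mem_erase.mp hk.2
      simp [hπ, Equiv.swap_apply_of_ne_of_ne hk2.1 hk.1]
    rw [hrest, hπi, hπj]
    linarith
  exact absurd (hmin π hπne) (not_lt.mpr hsum)
end
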